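/- arXiv:2303.00674 — 2 statements merged into one kernel-verified Lean document; each statement's English description precedes it below -/
import Mathlib

section
/- Let φ : ℝ^d → ℝ^d be C^2 with bounded derivatives, and let e^{uφ} denote its time-u flow. Let X : ℝ^d → ℝ^d be a C^1 diffeomorphism and for u ∈ [0,1] define w(u;y) as the solution of w'(u;y) = −(D(e^{uφ} ∘ X)(w(u;y)))^{-1} φ(e^{uφ}(X(w(u;y)))), w(0;y) = y. Then e^{uφ}(X(w(u;y))) = X(y) for all u ∈ [0,1]; in particular e^{φ}(X(w(1;y))) = X(y), so w(1;·) gives the inverse of the jump map on the level of inverse flows. -/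
/-!
Write `G u := e u ∘ X`. Along the curve `u ↦ w u y`, the chain rule gives
`d/du G u (w u y) = φ (G u (w u y)) + DG u (w u y) (w' u y)`, and by the choice of `w'` the second
term is `-φ (G u (w u y))`. So `u ↦ e u (X (w u y))` has zero derivative on `[0, 1]` and stays
equal to its value `X y` at `u = 0`.

The chain rule needs only differentiability of `G u` in space together with joint continuity of
the time derivative `φ ∘ G`; the latter holds because, by Grönwall, the flow of the Lipschitz
field `φ` is Lipschitz in space locally uniformly in time.
-/

open Set Real

section Flow

variable {E : Type*} [NormedAddCommGroup E] [NormedSpace ℝ E]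
  {f : E → E} {K : NNReal} {e : ℝ → E → E}

theorem dist_flow_le_of_nonneg (hf : LipschitzWith K f) (he0 : ∀ x, e 0 x = x)
    (he : ∀ t x, HasDerivAt (fun s => e s x) (f (e t x)) t) {t : ℝ} (ht : 0 ≤ t) (x y : E) :
    dist (e t x) (e t y) ≤ dist x y * exp (K * t) := by
  have hcont : ∀ x, Continuous fun s => e s x := fun x =>
    continuous_iff_continuousAt.2 fun s => (he s x).continuousAt
  simpa using dist_le_of_trajectories_ODE (fun _ => hf) (hcont x).continuousOn
    (fun s _ => (he s x).hasDerivWithinAt) (hcont y).continuousOn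
    (fun s _ => (he s y).hasDerivWithinAt) (by rw [he0, he0]) t ⟨ht, le_rfl⟩

theorem dist_flow_le (hf : LipschitzWith K f) (he0 : ∀ x, e 0 x = x)
    (he : ∀ t x, HasDerivAt (fun s => e s x) (f (e t x)) t) (t : ℝ) (x y : E) :
    dist (e t x) (e t y) ≤ dist x y * exp (K * |t|) := by
  rcases le_total 0 t with ht | ht
  · simpa [abs_of_nonneg ht] using dist_flow_le_of_nonneg hf he0 he ht x y
  · -- the reversed flow `s ↦ e (-s)` is the forward flow of `-f`
    have he_neg : ∀ s x, HasDerivAt (fun r => e (-r) x) (-f (e (-s) x)) s := fun s x => by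
      simpa [Function.comp_def] using (he (-s) x).scomp s (hasDerivAt_neg s)
    simpa [abs_of_nonpos ht] using
      dist_flow_le_of_nonneg (e := fun s => e (-s)) hf.neg (by simpa using he0) he_neg
        (neg_nonneg.2 ht) x y

theorem continuous_flow_uncurry (hf : LipschitzWith K f) (he0 : ∀ x, e 0 x = x)
    (he : ∀ t x, HasDerivAt (fun s => e s x) (f (e t x)) t) :
    Continuous fun p : ℝ × E => e p.1 p.2 := by
  refine continuous_iff_continuousAt.2 fun ⟨t₀, x₀⟩ => ?_
  set T := |t₀| + 1
  have hlip : ∀ t ∈ Ioo (-T) T, LipschitzOnWith (exp (K * T)).toNNReal (e t) univ :=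
    fun t ht => (LipschitzWith.of_dist_le' fun x y => (dist_flow_le hf he0 he t x y).trans <| by
      rw [mul_comm]
      gcongr
      exact (abs_lt.2 ht).le).lipschitzOnWith
  have hcont : ∀ x ∈ (univ : Set E), ContinuousOn (fun s => e s x) (Ioo (-T) T) := fun x _ =>
    (continuous_iff_continuousAt.2 fun s => (he s x).continuousAt).continuousOn
  refine (continuousOn_prod_of_continuousOn_lipschitzOnWith' (fun p : ℝ × E => e p.1 p.2) _
    hlip hcont).continuousAt (prod_mem_nhds (Ioo_mem_nhds ?_ ?_) Filter.univ_mem)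
  · linarith [neg_abs_le t₀]
  · linarith [le_abs_self t₀]

end Flow

section PartialDeriv

variable {E F : Type*} [NormedAddCommGroup F] [NormedSpace ℝ F] {g g' : ℝ → E → F} {c : ℝ → E}
  {t₀ : ℝ}

theorem hasDerivAt_sub_of_continuousAt_partialDeriv [TopologicalSpace E]
    (hg : ∀ t x, HasDerivAt (fun s => g s x) (g' t x) t)
    (hg' : ContinuousAt (fun p : ℝ × E => g' p.1 p.2) (t₀, c t₀)) (hc : ContinuousAt c t₀) :
    HasDerivAt (fun t => g t (c t) - g t₀ (c t)) (g' t₀ (c t₀)) t₀ := by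
  rw [hasDerivAt_iff_isLittleO, Asymptotics.isLittleO_iff]
  intro ε hε
  have hnear := hg'.eventually (Metric.closedBall_mem_nhds (g' t₀ (c t₀)) hε)
  rw [nhds_prod_eq] at hnear
  obtain ⟨δ, hδ, _, hnear_c, hg'δ⟩ := Metric.eventually_nhds_prod_iff.1 hnear
  filter_upwards [Metric.ball_mem_nhds t₀ hδ, hc.eventually hnear_c] with t ht hct
  -- mean value inequality for `s ↦ g s (c t) - s • g' t₀ (c t₀)` on the ball of radius `δ`
  have hmvt := (convex_ball t₀ δ).norm_image_sub_le_of_norm_hasDerivWithin_le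
    (f := fun s => g s (c t) - s • g' t₀ (c t₀))
    (fun s _ => ((hg s (c t)).sub ((hasDerivAt_id s).smul_const _)).hasDerivWithinAt)
    (fun s hs => by simpa [dist_eq_norm] using hg'δ hs hct)
    (Metric.mem_ball_self hδ) ht
  convert hmvt using 2
  simp only [sub_self, sub_zero, sub_smul]
  abel

theorem HasFDerivAt.hasDerivAt_comp_of_continuousAt_partialDeriv [NormedAddCommGroup E]
    [NormedSpace ℝ E] {c' : E} {L : E →L[ℝ] F}
    (hg : ∀ t x, HasDerivAt (fun s => g s x) (g' t x) t)
    (hg' : ContinuousAt (fun p : ℝ × E => g' p.1 p.2) (t₀, c t₀))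
    (hL : HasFDerivAt (g t₀) L (c t₀)) (hc : HasDerivAt c c' t₀) :
    HasDerivAt (fun t => g t (c t)) (g' t₀ (c t₀) + L c') t₀ := by
  convert (hasDerivAt_sub_of_continuousAt_partialDeriv hg hg' hc.continuousAt).add
    (hL.comp_hasDerivAt t₀ hc) using 1
  ext t
  simp

end PartialDeriv

theorem differentiableAt_of_fderiv_comp_eq_id {E F : Type*} [NormedAddCommGroup E]
    [NormedSpace ℝ E] [NormedAddCommGroup F] [NormedSpace ℝ F] [Nontrivial F] {f : E → F}
    {x : E} {L : F →L[ℝ] E} (h : (fderiv ℝ f x).comp L = ContinuousLinearMap.id ℝ F) :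
    DifferentiableAt ℝ f x := by
  by_contra hf
  rw [fderiv_zero_of_not_differentiableAt hf, ContinuousLinearMap.zero_comp] at h
  exact zero_ne_one h

theorem inverse_flow_jump_identity_general
    (d : ℕ) (φ : (Fin d → ℝ) → (Fin d → ℝ))
    (hφ_smooth : ContDiff ℝ 2 φ)
    (C : ℝ) (hφ_deriv_bdd : ∀ x, ‖fderiv ℝ φ x‖ ≤ C)
    -- the flow e^{uφ}
    (e : ℝ → (Fin d → ℝ) → (Fin d → ℝ))
    (he0 : ∀ x, e 0 x = x)
    (he : ∀ u x, HasDerivAt (fun v => e v x) (φ (e u x)) u)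
    -- X is a C¹ diffeomorphism
    (X : (Fin d → ℝ) → (Fin d → ℝ))
    (hX_smooth : ContDiff ℝ 1 X)
    -- J u x is the inverse of the Jacobian D(e^{uφ} ∘ X) at x
    (J : ℝ → (Fin d → ℝ) → ((Fin d → ℝ) →L[ℝ] (Fin d → ℝ)))
    (hJ₂ : ∀ u x, (fderiv ℝ (fun y => e u (X y)) x).comp (J u x)
      = ContinuousLinearMap.id ℝ (Fin d → ℝ))
    -- the process w
    (w : ℝ → (Fin d → ℝ) → (Fin d → ℝ))
    (hw0 : ∀ y, w 0 y = y)
    (hw : ∀ y, ∀ u ∈ Set.Icc (0:ℝ) 1,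
      HasDerivAt (fun v => w v y)
        (-(J u (w u y) (φ (e u (X (w u y)))))) u) :
    ∀ y, ∀ u ∈ Set.Icc (0:ℝ) 1, e u (X (w u y)) = X y := by
  rcases subsingleton_or_nontrivial (Fin d → ℝ) with _ | _
  · exact fun _ _ _ => Subsingleton.elim _ _
  have hφ_lip : LipschitzWith C.toNNReal φ :=
    lipschitzWith_of_nnnorm_fderiv_le (hφ_smooth.differentiable (by norm_num)) fun x => by
      simpa using Real.toNNReal_le_toNNReal (hφ_deriv_bdd x)
  have hφe_cont : Continuous fun p : ℝ × (Fin d → ℝ) => φ (e p.1 (X p.2)) :=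
    hφ_smooth.continuous.comp <| (continuous_flow_uncurry hφ_lip he0 he).comp <|
      continuous_fst.prodMk (hX_smooth.continuous.comp continuous_snd)
  intro y
  have hderiv : ∀ u ∈ Icc (0 : ℝ) 1, HasDerivAt (fun u => e u (X (w u y))) 0 u := by
    intro u hu
    have hG := (differentiableAt_of_fderiv_comp_eq_id (hJ₂ u (w u y))).hasFDerivAt
    have h := hG.hasDerivAt_comp_of_continuousAt_partialDeriv (fun t x => he t (X x))
      hφe_cont.continuousAt (hw y u hu)
    have hJ := congrArg (· (φ (e u (X (w u y))))) (hJ₂ u (w u y))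
    simp only [ContinuousLinearMap.comp_apply, ContinuousLinearMap.id_apply] at hJ
    rwa [map_neg, hJ, add_neg_cancel] at h
  have hconst := constant_of_has_deriv_right_zero
    (fun u hu => (hderiv u hu).continuousAt.continuousWithinAt)
    (fun u hu => (hderiv u (Ico_subset_Icc_self hu)).hasDerivWithinAt)
  intro u hu
  simpa [hw0, he0] using hconst u hu

/-- the key identity e^{uφ}(X(w(u;y))) = X(y), where w solves
w'(u;y) = −(D(e^{uφ}∘X)(w(u;y)))⁻¹ φ(e^{uφ}(X(w(u;y)))), w(0;y) = y.
The inverse Jacobian is represented by a family J of continuous linear maps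
inverting the Jacobian of e^{uφ} ∘ X. -/
theorem inverse_flow_jump_identity
    (d : ℕ) (φ : (Fin d → ℝ) → (Fin d → ℝ))
    (hφ_smooth : ContDiff ℝ 2 φ)
    (C : ℝ) (hφ_deriv_bdd : ∀ x, ‖fderiv ℝ φ x‖ ≤ C)
    -- the flow e^{uφ}
    (e : ℝ → (Fin d → ℝ) → (Fin d → ℝ))
    (he0 : ∀ x, e 0 x = x)
    (he : ∀ u x, HasDerivAt (fun v => e v x) (φ (e u x)) u)
    -- X is a C¹ diffeomorphism
    (X Xinv : (Fin d → ℝ) → (Fin d → ℝ))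
    (hX_smooth : ContDiff ℝ 1 X) (hXinv_smooth : ContDiff ℝ 1 Xinv)
    (hX₁ : ∀ x, Xinv (X x) = x) (hX₂ : ∀ x, X (Xinv x) = x)
    -- J u x is the inverse of the Jacobian D(e^{uφ} ∘ X) at x
    (J : ℝ → (Fin d → ℝ) → ((Fin d → ℝ) →L[ℝ] (Fin d → ℝ)))
    (hJ₁ : ∀ u x, (J u x).comp (fderiv ℝ (fun y => e u (X y)) x)
      = ContinuousLinearMap.id ℝ (Fin d → ℝ))
    (hJ₂ : ∀ u x, (fderiv ℝ (fun y => e u (X y)) x).comp (J u x)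
      = ContinuousLinearMap.id ℝ (Fin d → ℝ))
    -- the process w
    (w : ℝ → (Fin d → ℝ) → (Fin d → ℝ))
    (hw0 : ∀ y, w 0 y = y)
    (hw : ∀ y, ∀ u ∈ Set.Icc (0:ℝ) 1,
      HasDerivAt (fun v => w v y)
        (-(J u (w u y) (φ (e u (X (w u y)))))) u) :
    ∀ y, ∀ u ∈ Set.Icc (0:ℝ) 1, e u (X (w u y)) = X y :=
  inverse_flow_jump_identity_general d φ hφ_smooth C hφ_deriv_bdd e he0 he X hX_smooth J hJ₂ w hw0
    hw
end

section
/- Let α : ℝ^d → ℝ^{d×m}, β, σ : ℝ^d → ℝ^m be C^1 bounded with bounded derivatives and z ∈ ℝ^m. Consider on ℝ^{d+2} the vector field V(x,ξ,ζ) := (−α(x)z, −ξ β(x)ᵀz, −ξ σ(x)ᵀz). Its time-1 flow e^{Σ(·)z}(x,ξ_0,ζ_0) equals (e^{−α(·)z}(x), ξ_0 e^{−∫_0^1 β(e^{−rα(·)z}(x))ᵀz dr}, ζ_0 − ξ_0 ∫_0^1 e^{−∫_0^s β(e^{−rα(·)z}(x))ᵀz dr} σ(e^{−sα(·)z}(x))ᵀz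 ds). -/
open Matrix intervalIntegral

/-!
The `x`-component of the flow solves the autonomous ODE `x' = -α(x) z`, whose vector field is
globally Lipschitz (bounded derivative), so it coincides with `F`. Along this known curve the
`ξ`-equation is scalar and linear, solved by the integrating factor `exp (∫₀ᵘ β(F r x)ᵀz dr)`, and
the `ζ`-equation has a right-hand side independent of `ζ`, so it is a plain integration.
-/

theorem lipschitzWith_of_norm_fderiv_le {E G : Type*} [NormedAddCommGroup E] [NormedSpace ℝ E]
    [NormedAddCommGroup G] [NormedSpace ℝ G] {f : E → G} (hf : Differentiable ℝ f) {C : ℝ}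
    (bound : ∀ x, ‖fderiv ℝ f x‖ ≤ C) : LipschitzWith C.toNNReal f :=
  lipschitzWith_of_nnnorm_fderiv_le hf fun x => by
    rw [← NNReal.coe_le_coe, coe_nnnorm, Real.coe_toNNReal']
    exact le_max_of_le_left (bound x)

theorem LipschitzWith.exists_lipschitzWith_neg_mulVec {E ι κ : Type*} [PseudoMetricSpace E]
    [Fintype ι] [Fintype κ] {A : E → ι → κ → ℝ} {K : NNReal} (hA : LipschitzWith K A)
    (z : κ → ℝ) : ∃ K', LipschitzWith K' fun y => -(fun i => A y i ⬝ᵥ z) :=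
  let L := LinearMap.toContinuousLinearMap ((mulVecBilin ℝ ℝ).flip z)
  ⟨_, (-L).lipschitz.comp hA⟩

theorem HasDerivAt.fst {𝕜 E G : Type*} [NontriviallyNormedField 𝕜] [NormedAddCommGroup E]
    [NormedSpace 𝕜 E] [NormedAddCommGroup G] [NormedSpace 𝕜 G] {f : 𝕜 → E × G} {f' : E × G}
    {t : 𝕜} (h : HasDerivAt f f' t) : HasDerivAt (fun s => (f s).1) f'.1 t :=
  (ContinuousLinearMap.fst 𝕜 E G).hasFDerivAt.comp_hasDerivAt t h

theorem HasDerivAt.snd {𝕜 E G : Type*} [NontriviallyNormedField 𝕜] [NormedAddCommGroup E]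
    [NormedSpace 𝕜 E] [NormedAddCommGroup G] [NormedSpace 𝕜 G] {f : 𝕜 → E × G} {f' : E × G}
    {t : 𝕜} (h : HasDerivAt f f' t) : HasDerivAt (fun s => (f s).2) f'.2 t :=
  (ContinuousLinearMap.snd 𝕜 E G).hasFDerivAt.comp_hasDerivAt t h

theorem eq_mul_exp_neg_integral_of_hasDerivAt {y b : ℝ → ℝ} (hb : Continuous b)
    (hy : ∀ t, HasDerivAt y (-y t * b t) t) (t : ℝ) :
    y t = y 0 * Real.exp (-∫ r in (0:ℝ)..t, b r) := by
  have hconst : ∀ t, HasDerivAt (fun t => y t * Real.exp (∫ r in (0:ℝ)..t, b r)) 0 t := by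
    intro t
    exact ((hy t).mul (hb.integral_hasStrictDerivAt 0 t).hasDerivAt.exp).congr_deriv (by ring)
  have h := is_const_of_deriv_eq_zero (fun t => (hconst t).differentiableAt)
    (fun t => (hconst t).deriv) t 0
  rw [integral_same, Real.exp_zero, mul_one] at h
  rw [← h, Real.exp_neg, mul_inv_cancel_right₀ (Real.exp_ne_zero _)]

theorem augmented_jump_map_three_components_general
    (d m : ℕ)
    (α : (Fin d → ℝ) → (Fin d → Fin m → ℝ))
    (β σ : (Fin d → ℝ) → (Fin m → ℝ))
    (hα : ContDiff ℝ 1 α) (hβ : ContDiff ℝ 1 β) (hσ : ContDiff ℝ 1 σ)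
    (C : ℝ)
    (hα_deriv_bdd : ∀ x, ‖fderiv ℝ α x‖ ≤ C)
    (z : Fin m → ℝ)
    -- F r is the flow of x ↦ −α(x)z
    (F : ℝ → (Fin d → ℝ) → (Fin d → ℝ))
    (hF0 : ∀ x, F 0 x = x)
    (hF : ∀ r x, HasDerivAt (fun ρ => F ρ x)
      (-(fun i => α (F r x) i ⬝ᵥ z)) r)
    -- Ψ u is the flow of V(x,ξ,ζ) = (−α(x)z, −ξ β(x)ᵀz, −ξ σ(x)ᵀz)
    (Ψ : ℝ → ((Fin d → ℝ) × ℝ × ℝ) → ((Fin d → ℝ) × ℝ × ℝ))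
    (hΨ0 : ∀ p, Ψ 0 p = p)
    (hΨ : ∀ u p, HasDerivAt (fun v => Ψ v p)
      (-(fun i => α (Ψ u p).1 i ⬝ᵥ z),
       -(Ψ u p).2.1 * (β (Ψ u p).1 ⬝ᵥ z),
       -(Ψ u p).2.1 * (σ (Ψ u p).1 ⬝ᵥ z)) u) :
    ∀ (x : Fin d → ℝ) (ξ₀ ζ₀ : ℝ),
      Ψ 1 (x, ξ₀, ζ₀)
        = (F 1 x,
           ξ₀ * Real.exp (-∫ r in (0:ℝ)..1, β (F r x) ⬝ᵥ z),
           ζ₀ - ξ₀ * ∫ s in (0:ℝ)..1,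
             Real.exp (-∫ r in (0:ℝ)..s, β (F r x) ⬝ᵥ z)
               * (σ (F s x) ⬝ᵥ z)) := by
  intro x ξ₀ ζ₀
  set p := (x, ξ₀, ζ₀)
  obtain ⟨K, hv⟩ := (lipschitzWith_of_norm_fderiv_le (hα.differentiable one_ne_zero)
    hα_deriv_bdd).exists_lipschitzWith_neg_mulVec z
  have hX : (fun u => (Ψ u p).1) = fun u => F u x :=
    ODE_solution_unique_univ (t₀ := 0) (fun _ => hv.lipschitzOnWith (s := Set.univ))
      (fun u => ⟨(hΨ u p).fst, trivial⟩) (fun u => ⟨hF u x, trivial⟩) (by simp [hΨ0, hF0, p])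
  have hFc : Continuous fun s => F s x :=
    continuous_iff_continuousAt.2 fun s => (hF s x).continuousAt
  have hβc : Continuous fun s => β (F s x) ⬝ᵥ z :=
    (hβ.continuous.comp hFc).dotProduct continuous_const
  have hΞ : ∀ u, (Ψ u p).2.1 = ξ₀ * Real.exp (-∫ r in (0:ℝ)..u, β (F r x) ⬝ᵥ z) := by
    intro u
    have h := eq_mul_exp_neg_integral_of_hasDerivAt hβc
      (fun u => by simpa [← congrFun hX u] using (hΨ u p).snd.fst) u
    rwa [hΨ0] at h
  have hgc : Continuous fun s =>
      Real.exp (-∫ r in (0:ℝ)..s, β (F r x) ⬝ᵥ z) * (σ (F s x) ⬝ᵥ z) :=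
    (continuous_primitive (fun _ _ => hβc.intervalIntegrable _ _) 0).neg.rexp.mul
      ((hσ.continuous.comp hFc).dotProduct continuous_const)
  have hZ : (Ψ 1 p).2.2 - ζ₀ = -(ξ₀ * ∫ s in (0:ℝ)..1,
      Real.exp (-∫ r in (0:ℝ)..s, β (F r x) ⬝ᵥ z) * (σ (F s x) ⬝ᵥ z)) := by
    rw [← integral_const_mul, ← integral_neg, integral_eq_sub_of_hasDerivAt
      (fun u _ => by simpa [hΞ u, ← congrFun hX u, mul_assoc] using (hΨ u p).snd.snd)
      (by exact (hgc.const_mul ξ₀).neg.intervalIntegrable 0 1), hΨ0]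
  exact Prod.ext (congrFun hX 1) (Prod.ext (hΞ 1) (by linarith))

/-- explicit time-1 flow of the full augmented vector field
V(x,ξ,ζ) = (−α(x)z, −ξ β(x)ᵀz, −ξ σ(x)ᵀz) on ℝ^d × ℝ × ℝ:
e^{Σ(·)z}(x,ξ₀,ζ₀) = (e^{−α(·)z}(x),
  ξ₀ e^{−∫₀¹ β(e^{−rα(·)z}x)ᵀz dr},
  ζ₀ − ξ₀ ∫₀¹ e^{−∫₀ˢ β(e^{−rα(·)z}x)ᵀz dr} σ(e^{−sα(·)z}x)ᵀz ds). -/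
theorem augmented_jump_map_three_components
    (d m : ℕ)
    (α : (Fin d → ℝ) → (Fin d → Fin m → ℝ))
    (β σ : (Fin d → ℝ) → (Fin m → ℝ))
    (hα : ContDiff ℝ 1 α) (hβ : ContDiff ℝ 1 β) (hσ : ContDiff ℝ 1 σ)
    (C : ℝ)
    (hα_bdd : ∀ x, ‖α x‖ ≤ C) (hβ_bdd : ∀ x, ‖β x‖ ≤ C)
    (hσ_bdd : ∀ x, ‖σ x‖ ≤ C)
    (hα_deriv_bdd : ∀ x, ‖fderiv ℝ α x‖ ≤ C)
    (hβ_deriv_bdd : ∀ x, ‖fderiv ℝ β x‖ ≤ C)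
    (hσ_deriv_bdd : ∀ x, ‖fderiv ℝ σ x‖ ≤ C)
    (z : Fin m → ℝ)
    -- F r is the flow of x ↦ −α(x)z
    (F : ℝ → (Fin d → ℝ) → (Fin d → ℝ))
    (hF0 : ∀ x, F 0 x = x)
    (hF : ∀ r x, HasDerivAt (fun ρ => F ρ x)
      (-(fun i => α (F r x) i ⬝ᵥ z)) r)
    -- Ψ u is the flow of V(x,ξ,ζ) = (−α(x)z, −ξ β(x)ᵀz, −ξ σ(x)ᵀz)
    (Ψ : ℝ → ((Fin d → ℝ) × ℝ × ℝ) → ((Fin d → ℝ) × ℝ × ℝ))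
    (hΨ0 : ∀ p, Ψ 0 p = p)
    (hΨ : ∀ u p, HasDerivAt (fun v => Ψ v p)
      (-(fun i => α (Ψ u p).1 i ⬝ᵥ z),
       -(Ψ u p).2.1 * (β (Ψ u p).1 ⬝ᵥ z),
       -(Ψ u p).2.1 * (σ (Ψ u p).1 ⬝ᵥ z)) u) :
    ∀ (x : Fin d → ℝ) (ξ₀ ζ₀ : ℝ),
      Ψ 1 (x, ξ₀, ζ₀)
        = (F 1 x,
           ξ₀ * Real.exp (-∫ r in (0:ℝ)..1, β (F r x) ⬝ᵥ z),
           ζ₀ - ξ₀ * ∫ s in (0:ℝ)..1,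
             Real.exp (-∫ r in (0:ℝ)..s, β (F r x) ⬝ᵥ z)
               * (σ (F s x) ⬝ᵥ z)) :=
  augmented_jump_map_three_components_general d m α β σ hα hβ hσ C hα_deriv_bdd z F hF0 hF Ψ hΨ0 hΨ
end
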